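/- Let L be a real topological vector space. Then c₀(L) is a linear subspace of L^ℕ, and F₀(L) (c₀(L) with the uniform topology) is again a real topological vector space; that is, addition and scalar multiplication ℝ × c₀(L) → c₀(L) are continuous for the uniform topology. -/

import Mathlib

open Filter Topology Set

/-- The linear subspace of `L^ℕ` consisting of all null sequences in a real topological
vector space `L`. -/
def c0Submodule (L : Type*) [AddCommGroup L] [Module ℝ L] [TopologicalSpace L]
    [IsTopologicalAddGroup L] [ContinuousSMul ℝ L] : Submodule ℝ (ℕ → L) where
  carrier := {x : ℕ → L | Tendsto x atTop (𝓝 0)}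
  zero_mem' := tendsto_const_nhds
  add_mem' := fun ha hb => by have h := ha.add hb; rw [add_zero] at h; exact h
  smul_mem' := fun c x hx => by have h := hx.const_smul c; rw [smul_zero] at h; exact h

/-- The uniform topology on `c0Submodule L`: induced by the topology of uniform convergence
on `ℕ → L`, where `L` carries its canonical group uniformity. -/
instance F0TopologyTVS (L : Type*) [AddCommGroup L] [Module ℝ L] [TopologicalSpace L]
    [IsTopologicalAddGroup L] [ContinuousSMul ℝ L] : TopologicalSpace (c0Submodule L) :=
  letI : UniformSpace L := IsTopologicalAddGroup.rightUniformSpace L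
  TopologicalSpace.induced (fun x : c0Submodule L => UniformFun.ofFun (x : ℕ → L))
    inferInstance

/-- Let `L` be a real topological vector space. Then `c₀(L)` is a linear subspace of `L^ℕ`
(in particular it is closed under scalar multiplication), and `F₀(L)` (that is, `c₀(L)` with
the uniform topology) is again a real topological vector space: addition and scalar
multiplication `ℝ × c₀(L) → c₀(L)` are continuous for the uniform topology. -/
theorem c0_of_tvs_is_tvs (L : Type*) [AddCommGroup L] [Module ℝ L] [TopologicalSpace L]
    [IsTopologicalAddGroup L] [ContinuousSMul ℝ L] :
    (∀ (c : ℝ) (x : ℕ → L), Tendsto x atTop (𝓝 0) → Tendsto (c • x) atTop (𝓝 0)) ∧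
      ContinuousAdd (c0Submodule L) ∧ ContinuousSMul ℝ (c0Submodule L) := by
  let _ : UniformSpace L := IsTopologicalAddGroup.rightUniformSpace L
  have : IsUniformAddGroup L := isUniformAddGroup_of_addCommGroup
  have hφ : IsInducing (UniformFun.ofFun ∘ (c0Submodule L).subtype) := ⟨rfl⟩
  refine ⟨fun c _ hx => (c0Submodule L).smul_mem c hx, ?_, ?_⟩
  · let φ : c0Submodule L →+ (UniformFun ℕ L) := (c0Submodule L).subtype.toAddMonoidHom
    exact (hφ.topologicalAddGroup φ).toContinuousAdd
  · -- Uniform convergence on functions with von Neumann bounded range is compatible with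
    -- scalar multiplication, and a convergent sequence has bounded range.
    exact UniformFun.continuousSMul_induced_of_range_bounded ℝ ℕ L (c0Submodule L)
      (c0Submodule L).subtype hφ fun x => x.2.isVonNBounded_range ℝ
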